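/- Let D be a locally nilpotent derivation of ℂ[x,y,z] with exp(D) not the identity. Then there exists an irreducible locally nilpotent derivation D' of ℂ[x,y,z] and d ∈ ker D' such that D = d·D'; moreover D' is unique up to multiplication by a nonzero scalar, and ker D = ker D'. -/

import Mathlib

open Finset

/-- Local nilpotency of a map. -/
def IsLND {A : Type*} [Zero A] (D : A → A) : Prop := ∀ a : A, ∃ n : ℕ, D^[n] a = 0

/-- A locally nilpotent derivation `D'` is irreducible if `D' ≠ 0` and whenever
`D' = g • D''` with `D''` locally nilpotent and `g ∈ ker D''`, `g` is a unit. -/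
def IsIrreducibleLND {A : Type*} [CommRing A] [Algebra ℂ A] (D' : Derivation ℂ A A) : Prop :=
  D' ≠ 0 ∧ IsLND ⇑D' ∧
    ∀ (g : A) (D'' : Derivation ℂ A A), IsLND ⇑D'' → D'' g = 0 → D' = g • D'' → IsUnit g

/-- `E` is the exponential of the locally nilpotent map `D`. -/
def IsExp {A : Type*} [CommRing A] [Algebra ℚ A] (D E : A → A) : Prop :=
  ∀ (a : A) (N : ℕ), (∀ i, N ≤ i → D^[i] a = 0) →
    E a = ∑ i ∈ Finset.range N, ((i.factorial : ℚ)⁻¹) • D^[i] a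

/-!
Let `d` be a gcd of `D x, D y, D z` and write `D = d • D'`. Any factorisation `D = e • D''` has
`e ∣ d`, which makes `D'` irreducible. Since `d ∣ D d` and a locally nilpotent derivation of a
domain of characteristic zero only divides its own value when that value is zero (compare the top
nonvanishing iterates of `f` and of `D f / f` via the Leibniz rule), `D d = 0`, hence `D' d = 0`
and `D'` is locally nilpotent. For a second decomposition `D = d'' • D''` we get `d = d'' e` and
`D'' = e • D'`; `D''` kills `d` and `d''`, hence `e`, so `e` is a unit by irreducibility of `D''`,
i.e. a nonzero constant.
-/

theorem IsExp.eq_id_of_eq_zero {A : Type*} [CommRing A] [Algebra ℚ A] {E : A → A}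
    (hE : IsExp 0 E) : E = id := by
  funext a
  have hvanish (i : ℕ) (hi : 1 ≤ i) : (0 : A → A)^[i] a = 0 := by
    obtain ⟨k, rfl⟩ := Nat.exists_eq_add_of_le' hi
    rw [Function.iterate_succ_apply']
    rfl
  simp [hE a 1 hvanish]

namespace IsLND

variable {A : Type*} [Zero A] {f : A → A}

theorem iterate_eq_zero_of_le (h0 : f 0 = 0) {a : A} {m k : ℕ} (hm : f^[m] a = 0)
    (hmk : m ≤ k) :
    f^[k] a = 0 := by
  obtain ⟨j, rfl⟩ := Nat.exists_eq_add_of_le hmk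
  rw [add_comm, Function.iterate_add_apply, hm, Function.iterate_fixed h0]

theorem exists_iterate_ne_zero (hf : IsLND f) {a : A} (ha : a ≠ 0) :
    ∃ m, f^[m] a ≠ 0 ∧ f^[m + 1] a = 0 := by
  classical
  obtain ⟨m, hm⟩ : ∃ m, Nat.find (hf a) = m + 1 :=
    Nat.exists_eq_succ_of_ne_zero fun h => ha (by simpa [h] using Nat.find_spec (hf a))
  exact ⟨m, Nat.find_min (hf a) (by omega), hm ▸ Nat.find_spec (hf a)⟩

end IsLND

namespace Derivation

variable {R A : Type*} [CommRing R] [CommRing A] [Algebra R A]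

theorem iterate_map_mul (D : Derivation R A A) (n : ℕ) (a b : A) :
    D^[n] (a * b) = ∑ ij ∈ antidiagonal n, n.choose ij.1 • (D^[ij.1] a * D^[ij.2] b) := by
  induction n with
  | zero => simp
  | succ n ih =>
    rw [sum_antidiagonal_choose_succ_nsmul (M := A) (fun i j => D^[i] a * D^[j] b) n]
    simp only [Function.iterate_succ_apply', ih, map_sum, map_nsmul, leibniz, smul_eq_mul,
      nsmul_add, sum_add_distrib]
    congr 1
    refine sum_congr rfl fun ⟨i, j⟩ hij => ?_
    rw [n.choose_symm_of_eq_add (mem_antidiagonal.1 hij).symm, mul_comm]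

theorem iterate_smul_apply (D : Derivation R A A) {d : A} (hd : D d = 0) (k : ℕ) (a : A) :
    (d • D)^[k] a = d ^ k * D^[k] a := by
  induction k with
  | zero => simp
  | succ k ih =>
    have hdk : D (d ^ k) = 0 := by simp [leibniz_pow, hd]
    rw [Function.iterate_succ_apply', Function.iterate_succ_apply', ih, smul_apply, leibniz, hdk]
    simp only [smul_eq_mul, mul_zero, add_zero]
    ring

theorem smul_apply_eq_zero_iff [NoZeroDivisors A] {D : Derivation R A A} {d : A} (hd : d ≠ 0)
    (a : A) : (d • D) a = 0 ↔ D a = 0 := by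
  simp [hd]

theorem smul_left_cancel [NoZeroDivisors A] {D₁ D₂ : Derivation R A A} {d : A} (hd : d ≠ 0)
    (h : d • D₁ = d • D₂) : D₁ = D₂ :=
  ext fun a => mul_left_cancel₀ hd (by simpa using congr($h a))

end Derivation

section LND

variable {R A : Type*} [CommRing R] [CommRing A] [Algebra R A] [NoZeroDivisors A]

theorem IsLND.of_smul {D : Derivation R A A} {d : A} (hd0 : d ≠ 0) (hd : D d = 0)
    (h : IsLND (d • D)) : IsLND D := fun a => by
  obtain ⟨n, hn⟩ := h a
  rw [D.iterate_smul_apply hd] at hn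
  exact ⟨n, (mul_eq_zero.1 hn).resolve_left (pow_ne_zero n hd0)⟩

variable [CharZero A]

theorem Derivation.iterate_add_map_mul_ne_zero (D : Derivation R A A) {a b : A} {m n : ℕ}
    (ha : D^[m] a ≠ 0) (ha' : D^[m + 1] a = 0) (hb : D^[n] b ≠ 0) (hb' : D^[n + 1] b = 0) :
    D^[m + n] (a * b) ≠ 0 := by
  have h0 : D 0 = 0 := map_zero D
  rw [D.iterate_map_mul, sum_eq_single_of_mem (m, n) (HasAntidiagonal.mem_antidiagonal.2 rfl)]
  · rw [nsmul_eq_mul]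
    exact mul_ne_zero (Nat.cast_ne_zero.2 (Nat.choose_pos (by omega)).ne') (mul_ne_zero ha hb)
  · rintro ⟨i, j⟩ hij hne
    rw [HasAntidiagonal.mem_antidiagonal] at hij
    rcases lt_or_gt_of_ne (show i ≠ m by rintro rfl; exact hne (by simp_all)) with hi | hi
    · rw [IsLND.iterate_eq_zero_of_le h0 hb' (by omega), mul_zero, smul_zero]
    · rw [IsLND.iterate_eq_zero_of_le h0 ha' (by omega), zero_mul, smul_zero]

theorem IsLND.map_eq_zero_of_dvd {D : Derivation R A A} (hD : IsLND D) {f : A} (h : f ∣ D f) :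
    D f = 0 := by
  by_contra hne
  obtain ⟨g, hg⟩ := h
  have hf : f ≠ 0 := by rintro rfl; exact hne (map_zero D)
  have hg0 : g ≠ 0 := by rintro rfl; exact hne (by rw [hg, mul_zero])
  obtain ⟨m, hm, hm'⟩ := hD.exists_iterate_ne_zero hf
  obtain ⟨n, hn, hn'⟩ := hD.exists_iterate_ne_zero hg0
  refine D.iterate_add_map_mul_ne_zero hm hm' hn hn' ?_
  rw [← hg, ← Function.iterate_succ_apply]
  exact IsLND.iterate_eq_zero_of_le (map_zero D) hm' (by omega)

theorem IsLND.apply_eq_zero_of_eq_smul {D D' : Derivation R A A} {d : A} (hD : IsLND D)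
    (hd0 : d ≠ 0) (hfac : D = d • D') : D' d = 0 := by
  have hDd : D d = 0 := hD.map_eq_zero_of_dvd ⟨D' d, by rw [hfac]; rfl⟩
  rwa [hfac, Derivation.smul_apply_eq_zero_iff hd0] at hDd

end LND

theorem exists_dvd_iff_forall_dvd {α ι : Type*} [CommMonoidWithZero α] [GCDMonoid α]
    [Finite ι] (f : ι → α) : ∃ d, ∀ e, e ∣ d ↔ ∀ i, e ∣ f i := by
  classical
  have := Fintype.ofFinite ι
  suffices ∀ s : Finset ι, ∃ d, ∀ e, e ∣ d ↔ ∀ i ∈ s, e ∣ f i by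
    simpa using this univ
  intro s
  induction s using Finset.induction_on with
  | empty => exact ⟨0, by simp⟩
  | insert i s _ ih =>
    obtain ⟨d, hd⟩ := ih
    exact ⟨gcd (f i) d, fun e => by simp [_root_.dvd_gcd_iff, hd]⟩

namespace MvPolynomial

theorem exists_derivation_eq_smul_of_forall_dvd {σ R : Type*} [CommRing R]
    (D : Derivation R (MvPolynomial σ R) (MvPolynomial σ R)) {e : MvPolynomial σ R}
    (h : ∀ i, e ∣ D (X i)) : ∃ D₀, D = e • D₀ := by
  choose g hg using h
  exact ⟨mkDerivation R g, derivation_ext fun i => by simp [hg i]⟩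

theorem exists_derivation_eq_smul_forall_dvd {σ R : Type*} [Finite σ] [CommRing R] [IsDomain R]
    [UniqueFactorizationMonoid R] (D : Derivation R (MvPolynomial σ R) (MvPolynomial σ R)) :
    ∃ (d : MvPolynomial σ R) (D' : Derivation R (MvPolynomial σ R) (MvPolynomial σ R)),
      D = d • D' ∧ ∀ e D'', D = e • D'' → e ∣ d := by
  let := UniqueFactorizationMonoid.toGCDMonoid (MvPolynomial σ R)
  obtain ⟨d, hd⟩ := exists_dvd_iff_forall_dvd fun i => D (X i)
  obtain ⟨D', hD'⟩ := exists_derivation_eq_smul_of_forall_dvd D ((hd d).1 dvd_rfl)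
  refine ⟨d, D', hD', fun e D'' h => (hd e).2 fun i => ⟨D'' (X i), by rw [h]; rfl⟩⟩

theorem C_smul_derivation {σ R : Type*} [CommRing R] (c : R)
    (D : Derivation R (MvPolynomial σ R) (MvPolynomial σ R)) :
    (C c : MvPolynomial σ R) • D = c • D := by
  rw [← algebraMap_eq, algebraMap_smul]

end MvPolynomial

section Irreducible

variable {A : Type*} [CommRing A] [IsDomain A] [Algebra ℂ A]

theorem isIrreducibleLND_of_eq_smul_of_forall_dvd {D D' : Derivation ℂ A A} {d : A}
    (hD0 : D ≠ 0) (hD' : IsLND D') (hfac : D = d • D')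
    (hmax : ∀ (e : A) (D'' : Derivation ℂ A A), D = e • D'' → e ∣ d) :
    IsIrreducibleLND D' := by
  have hd0 : d ≠ 0 := by rintro rfl; exact hD0 (by simp [hfac])
  refine ⟨by rintro rfl; exact hD0 (by simp [hfac]), hD', fun g D'' _ _ hg => ?_⟩
  obtain ⟨u, hu⟩ := hmax (d * g) D'' (by rw [hfac, hg, smul_smul])
  exact IsUnit.of_mul_eq_one u (mul_left_cancel₀ hd0 (by rw [mul_one, ← mul_assoc, ← hu]))

theorem exists_isUnit_eq_smul_of_isIrreducibleLND {D D' D'' : Derivation ℂ A A} {d d'' : A}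
    (hD0 : D ≠ 0) (hD' : IsLND D') (hD'd : D' d = 0) (hfac : D = d • D')
    (hmax : ∀ (e : A) (D'' : Derivation ℂ A A), D = e • D'' → e ∣ d)
    (hirr : IsIrreducibleLND D'') (hd'' : D'' d'' = 0) (hfac'' : D = d'' • D'') :
    ∃ e : A, IsUnit e ∧ D'' = e • D' := by
  obtain ⟨e, rfl⟩ := hmax d'' D'' hfac''
  have hd''0 : d'' ≠ 0 := by rintro rfl; exact hD0 (by simp [hfac''])
  have he0 : e ≠ 0 := by rintro rfl; exact hD0 (by simp [hfac])
  have hD'' : D'' = e • D' :=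
    Derivation.smul_left_cancel hd''0 (by rw [← hfac'', hfac, smul_smul])
  have hD''e : D'' e = 0 := by
    have : D'' (d'' * e) = 0 := by rw [hD'', Derivation.smul_apply, hD'd, smul_zero]
    simpa [Derivation.leibniz, hd'', hd''0] using this
  have hD'e : D' e = 0 := by rwa [hD'', Derivation.smul_apply_eq_zero_iff he0] at hD''e
  exact ⟨e, hirr.2.2 e D' hD' hD'e hD'', hD''⟩

end Irreducible

/-- Standard decomposition: every locally nilpotent derivation `D` of `ℂ[x,y,z]`
whose exponential is not the identity factors as `D = d • D'` with `D'`
irreducible, `d ∈ ker D'` and `ker D = ker D'`; moreover `D'` is unique up to a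
nonzero scalar. -/
theorem standard_decomposition
    (D : Derivation ℂ (MvPolynomial (Fin 3) ℂ) (MvPolynomial (Fin 3) ℂ))
    (hD : IsLND ⇑D)
    (E : MvPolynomial (Fin 3) ℂ → MvPolynomial (Fin 3) ℂ)
    (hE : IsExp ⇑D E) (hEne : E ≠ id) :
    ∃ (D' : Derivation ℂ (MvPolynomial (Fin 3) ℂ) (MvPolynomial (Fin 3) ℂ))
      (d : MvPolynomial (Fin 3) ℂ),
      IsLND ⇑D' ∧ IsIrreducibleLND D' ∧ D' d = 0 ∧ D = d • D' ∧
      (∀ a, D a = 0 ↔ D' a = 0) ∧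
      (∀ (D'' : Derivation ℂ (MvPolynomial (Fin 3) ℂ) (MvPolynomial (Fin 3) ℂ))
        (d'' : MvPolynomial (Fin 3) ℂ),
        IsLND ⇑D'' → IsIrreducibleLND D'' → D'' d'' = 0 → D = d'' • D'' →
          ∃ c : ℂ, c ≠ 0 ∧ D'' = c • D') := by
  have hD0 : D ≠ 0 := by
    rintro rfl
    exact hEne (IsExp.eq_id_of_eq_zero hE)
  obtain ⟨d, D', hfac, hmax⟩ := MvPolynomial.exists_derivation_eq_smul_forall_dvd D
  have hd0 : d ≠ 0 := by rintro rfl; exact hD0 (by simp [hfac])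
  have hD'd : D' d = 0 := hD.apply_eq_zero_of_eq_smul hd0 hfac
  have hD' : IsLND D' := IsLND.of_smul hd0 hD'd (hfac ▸ hD)
  refine ⟨D', d, hD', isIrreducibleLND_of_eq_smul_of_forall_dvd hD0 hD' hfac hmax, hD'd, hfac,
    fun a => hfac ▸ Derivation.smul_apply_eq_zero_iff hd0 a, fun D'' d'' _ hirr hd'' h => ?_⟩
  obtain ⟨e, he, rfl⟩ :=
    exists_isUnit_eq_smul_of_isIrreducibleLND hD0 hD' hD'd hfac hmax hirr hd'' h
  obtain ⟨c, hc, rfl⟩ := MvPolynomial.isUnit_iff_eq_C_of_isReduced.1 he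
  exact ⟨c, hc.ne_zero, MvPolynomial.C_smul_derivation c D'⟩
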